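/- arXiv:1702.08133 — 2 statements merged into one kernel-verified Lean document; each statement's English description precedes it below -/
import Mathlib

section
/- The function f(P) = Q(√(3P)) · log₂(√P) is nonincreasing for P ≥ 6, and in particular 2·Q(√(3P))·log₂(√P) ≤ 0.02 for all P ≥ 6. -/
open MeasureTheory

/-- The standard Gaussian tail function `Q`. -/
noncomputable def gaussQ (x : ℝ) : ℝ :=
  (1 / Real.sqrt (2 * Real.pi)) * ∫ u in Set.Ioi x, Real.exp (-u ^ 2 / 2)

/-!
Since `Q' = -φ` for the standard normal density `φ`, Mills' inequality `Q x ≤ φ x / x`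
(compare `e^{-u²/2}` with `(u / x) e^{-u²/2}` on `(x, ∞)`) shows that the derivative
`-φ(√(3P)) · 3 / (2√(3P)) · log P + Q(√(3P)) / P` of `Q(√(3P)) · log P` is nonpositive once
`1 / P ≤ (3 / 2) log P`, in particular for `P ≥ 2`. The bound then only has to be checked at
`P = 6`, where Mills gives `Q(√18) ≤ e^{-9} / 4 ≤ 2^{-11}`, and `log₂ √6 ≤ 2`.
-/

open Real Set Filter Topology

lemma integrable_exp_neg_sq_div_two : Integrable fun u : ℝ => exp (-u ^ 2 / 2) := by
  convert integrable_exp_neg_mul_sq (b := 1 / 2) (by norm_num) using 3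
  ring

lemma integrable_mul_exp_neg_sq_div_two : Integrable fun u : ℝ => u * exp (-u ^ 2 / 2) := by
  convert integrable_mul_exp_neg_mul_sq (b := 1 / 2) (by norm_num) using 4
  ring

lemma gaussQ_eq_sub_intervalIntegral (x : ℝ) :
    gaussQ x = (√(2 * π))⁻¹ *
      ((∫ u in Ioi 0, exp (-u ^ 2 / 2)) - ∫ u in 0..x, exp (-u ^ 2 / 2)) := by
  rw [gaussQ, one_div, ← intervalIntegral.integral_Ioi_sub_Ioi'
    integrable_exp_neg_sq_div_two.integrableOn integrable_exp_neg_sq_div_two.integrableOn,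
    sub_sub_cancel]

theorem hasDerivAt_gaussQ (x : ℝ) :
    HasDerivAt gaussQ (-((√(2 * π))⁻¹ * exp (-x ^ 2 / 2))) x := by
  have hcont : Continuous fun u : ℝ => exp (-u ^ 2 / 2) := by fun_prop
  have hF := intervalIntegral.integral_hasDerivAt_right (a := 0)
    integrable_exp_neg_sq_div_two.intervalIntegrable (hcont.stronglyMeasurableAtFilter _ _)
    hcont.continuousAt (b := x)
  rw [funext gaussQ_eq_sub_intervalIntegral]
  simpa using ((hasDerivAt_const x _).sub hF).const_mul (√(2 * π))⁻¹

theorem integral_Ioi_mul_exp_neg_sq_div_two (x : ℝ) :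
    ∫ u in Ioi x, u * exp (-u ^ 2 / 2) = exp (-x ^ 2 / 2) := by
  have hderiv (u : ℝ) : HasDerivAt (fun u => -exp (-u ^ 2 / 2)) (u * exp (-u ^ 2 / 2)) u := by
    have h : HasDerivAt (fun u : ℝ => -u ^ 2 / 2) (-u) u := by
      simpa [neg_div] using ((hasDerivAt_pow 2 u).div_const 2).fun_neg
    exact h.exp.fun_neg.congr_deriv (by ring)
  have hlim : Tendsto (fun u : ℝ => -exp (-u ^ 2 / 2)) atTop (𝓝 0) := by
    have : Tendsto (fun u : ℝ => -u ^ 2 / 2) atTop atBot :=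
      (tendsto_neg_atBot_iff.2 (tendsto_pow_atTop two_ne_zero)).atBot_div_const two_pos
    simpa using (tendsto_exp_atBot.comp this).neg
  rw [integral_Ioi_of_hasDerivAt_of_tendsto' (fun u _ => hderiv u)
    integrable_mul_exp_neg_sq_div_two.integrableOn hlim]
  ring

theorem gaussQ_le_of_pos {x : ℝ} (hx : 0 < x) :
    gaussQ x ≤ (√(2 * π))⁻¹ * exp (-x ^ 2 / 2) / x := by
  have htail : ∫ u in Ioi x, exp (-u ^ 2 / 2) ≤ ∫ u in Ioi x, u * exp (-u ^ 2 / 2) / x := by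
    refine setIntegral_mono_on integrable_exp_neg_sq_div_two.integrableOn
      (integrable_mul_exp_neg_sq_div_two.integrableOn.div_const x) measurableSet_Ioi
      fun u hu => ?_
    rw [mul_div_right_comm]
    exact le_mul_of_one_le_left (exp_pos _).le ((one_le_div hx).2 (le_of_lt hu))
  rw [integral_div, integral_Ioi_mul_exp_neg_sq_div_two] at htail
  rw [gaussQ, one_div, mul_div_assoc]
  gcongr

theorem hasDerivAt_gaussQ_sqrt_mul_mul_log {c P : ℝ} (hc : 0 < c) (hP : 0 < P) :
    HasDerivAt (fun P => gaussQ √(c * P) * log P)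
      (-((√(2 * π))⁻¹ * exp (-(c * P) / 2)) * (c / (2 * √(c * P))) * log P +
        gaussQ √(c * P) * P⁻¹) P := by
  have hcP : 0 < c * P := mul_pos hc hP
  have hsqrt : HasDerivAt (fun P => √(c * P)) (c / (2 * √(c * P))) P :=
    ((hasDerivAt_id P).const_mul c).sqrt (by simpa using hcP.ne') |>.congr_deriv (by simp)
  have hQ := (hasDerivAt_gaussQ √(c * P)).comp P hsqrt
  rw [sq_sqrt hcP.le] at hQ
  exact hQ.mul (hasDerivAt_log hP.ne')

theorem antitoneOn_gaussQ_sqrt_three_mul_mul_log :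
    AntitoneOn (fun P => gaussQ √(3 * P) * log P) (Ici 2) := by
  have hderiv (P : ℝ) (hP : 2 ≤ P) := hasDerivAt_gaussQ_sqrt_mul_mul_log three_pos (by linarith)
  refine antitoneOn_of_hasDerivWithinAt_nonpos (convex_Ici 2)
    (fun P hP => (hderiv P hP).continuousAt.continuousWithinAt)
    (fun P hP => (hderiv P (interior_subset hP)).hasDerivWithinAt) fun P hP => ?_
  rw [interior_Ici, mem_Ioi] at hP
  set x := √(3 * P)
  set φ := (√(2 * π))⁻¹ * exp (-(3 * P) / 2)
  have hx : 0 < x := sqrt_pos.2 (by linarith)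
  have hmills : gaussQ x ≤ φ / x := by
    have := gaussQ_le_of_pos hx
    rwa [sq_sqrt (by linarith)] at this
  -- `1 / P ≤ 1 / 2 < (3 / 2) log 2 ≤ (3 / 2) log P`
  have hinv : P⁻¹ ≤ 3 / 2 * log P := by
    have := log_two_gt_d9
    have := log_le_log two_pos hP.le
    have := inv_anti₀ two_pos hP.le
    linarith
  calc -φ * (3 / (2 * x)) * log P + gaussQ x * P⁻¹
      ≤ -φ * (3 / (2 * x)) * log P + φ / x * (3 / 2 * log P) := by gcongr
    _ = 0 := by ring

theorem gaussQ_sqrt_eighteen_le : gaussQ √18 ≤ 1 / 2048 := by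
  have h4 : 4 ≤ √18 := le_sqrt_of_sq_le (by norm_num)
  have hC : (√(2 * π))⁻¹ ≤ 1 := inv_le_one_of_one_le₀ (one_le_sqrt.2 (by linarith [pi_gt_three]))
  calc gaussQ √18 ≤ (√(2 * π))⁻¹ * exp (-√18 ^ 2 / 2) / √18 :=
        gaussQ_le_of_pos (by positivity)
    _ = (√(2 * π))⁻¹ * exp (-1) ^ 9 / √18 := by
        rw [sq_sqrt (by norm_num), ← exp_nat_mul]
        norm_num
    _ ≤ 1 * (1 / 2) ^ 9 / 4 := by
        gcongr
        exact exp_neg_one_lt_half.le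
    _ = 1 / 2048 := by norm_num

/-- `P ↦ Q(√(3P))·log₂(√P)` is nonincreasing for `P ≥ 6`, and in particular
`2·Q(√(3P))·log₂(√P) ≤ 0.02` for all `P ≥ 6`. -/
theorem gaussQ_log_antitone :
    AntitoneOn (fun P : ℝ => gaussQ (Real.sqrt (3 * P)) * Real.logb 2 (Real.sqrt P))
      (Set.Ici (6 : ℝ)) ∧
    ∀ P : ℝ, 6 ≤ P →
      2 * gaussQ (Real.sqrt (3 * P)) * Real.logb 2 (Real.sqrt P) ≤ 0.02 := by
  have hlogb {P : ℝ} (hP : 6 ≤ P) :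
      gaussQ √(3 * P) * logb 2 √P = gaussQ √(3 * P) * log P / (2 * log 2) := by
    rw [logb, log_sqrt (by linarith)]
    ring
  have hanti : AntitoneOn (fun P => gaussQ √(3 * P) * logb 2 √P) (Ici 6) := by
    intro a ha b hb hab
    dsimp only
    rw [hlogb ha, hlogb hb]
    gcongr ?_ / _
    exact antitoneOn_gaussQ_sqrt_three_mul_mul_log (Ici_subset_Ici.2 (by norm_num) ha)
      (Ici_subset_Ici.2 (by norm_num) hb) hab
  have hlogb6 : logb 2 √6 ≤ 2 := by
    rw [logb_le_iff_le_rpow one_lt_two (by positivity), sqrt_le_left (by positivity)]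
    norm_num
  refine ⟨hanti, fun P hP => ?_⟩
  calc 2 * gaussQ √(3 * P) * logb 2 √P ≤ 2 * (gaussQ √(3 * 6) * logb 2 √6) := by
        rw [mul_assoc]
        gcongr 2 * ?_
        exact hanti self_mem_Ici hP hP
    _ ≤ 2 * (1 / 2048 * 2) := by
        rw [show (3 : ℝ) * 6 = 18 by norm_num]
        gcongr
        · exact logb_nonneg one_lt_two (one_le_sqrt.2 (by norm_num))
        · exact gaussQ_sqrt_eighteen_le
    _ ≤ 0.02 := by norm_num
end

section
/- Consider channels with gains λ_j, λ_k, powers P_j, P_k and quantizer levels N_j, N_k. Suppose at a point one channel's minimum is achieved by its power term and the other channel's minimum by its quantizer term, i.e. min{1 + λ_j²P_j, (N_j+1)²} = 1 + λ_j²P_j < (N_j+1)² and min{1 + λ_k²P_k, (N_k+1)²} = (N_k+1)² < 1 + λ_k²P_k. Then this point is not a maximizer of the total rate: there exist ε₁, ε₂ > 0, reallocating power toward the power-limited channel j and quantizers toward the quantizer-limited channel k, with 1 + λ_j²(P_j+ε₂) ≤ (N_j − ε₁ + 1)² and (N_k + ε₁ + 1)² ≤ 1 + λ_k²(P_k − ε₂),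 such that both new minima strictly exceed the old ones. -/
/-- If at an allocation one subchannel's `min` is achieved (strictly) by its
power term and another's (strictly) by its quantizer term, the allocation is
not optimal: power can be shifted to the power-limited channel and quantizers
to the quantizer-limited channel so that both minima strictly increase. -/
theorem quantizer_waterfilling_exchange
    (lamj lamk Pj Pk Nj Nk : ℝ)
    (hlamj : 0 < lamj) (hlamk : 0 < lamk)
    (hPj : 0 ≤ Pj) (hPk : 0 ≤ Pk) (hNj : 0 ≤ Nj) (hNk : 0 ≤ Nk)
    (hj : 1 + lamj ^ 2 * Pj < (Nj + 1) ^ 2)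
    (hk : (Nk + 1) ^ 2 < 1 + lamk ^ 2 * Pk) :
    ∃ ε₁ ε₂ : ℝ, 0 < ε₁ ∧ 0 < ε₂ ∧
      1 + lamj ^ 2 * (Pj + ε₂) ≤ (Nj - ε₁ + 1) ^ 2 ∧
      (Nk + ε₁ + 1) ^ 2 ≤ 1 + lamk ^ 2 * (Pk - ε₂) ∧
      min (1 + lamj ^ 2 * (Pj + ε₂)) ((Nj - ε₁ + 1) ^ 2) >
        min (1 + lamj ^ 2 * Pj) ((Nj + 1) ^ 2) ∧
      min (1 + lamk ^ 2 * (Pk - ε₂)) ((Nk + ε₁ + 1) ^ 2) >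
        min (1 + lamk ^ 2 * Pk) ((Nk + 1) ^ 2) := by
  set δj := (Nj + 1) ^ 2 - (1 + lamj ^ 2 * Pj) with hδjdef
  set δk := (1 + lamk ^ 2 * Pk) - (Nk + 1) ^ 2 with hδkdef
  have hδj : 0 < δj := by simp [hδjdef]; linarith
  have hδk : 0 < δk := by simp [hδkdef]; linarith
  set M := max (max (lamj ^ 2) (lamk ^ 2)) (max (2 * (Nj + 1)) (max (2 * (Nk + 1)) 1)) with hMdef
  have hM1 : (1 : ℝ) ≤ M :=
    le_trans (le_max_right _ _) (le_trans (le_max_right _ _) (le_max_right _ _))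
  have hMpos : 0 < M := by linarith
  have hlj2 : lamj ^ 2 ≤ M := le_trans (le_max_left _ _) (le_max_left _ _)
  have hlk2 : lamk ^ 2 ≤ M := le_trans (le_max_right _ _) (le_max_left _ _)
  have hNjM : 2 * (Nj + 1) ≤ M := le_trans (le_max_left _ _) (le_max_right _ _)
  have hNkM : 2 * (Nk + 1) ≤ M :=
    le_trans (le_max_left _ _) (le_trans (le_max_right _ _) (le_max_right _ _))
  set m := min (min δj δk) 1 with hmdef
  have hm : 0 < m := lt_min (lt_min hδj hδk) one_pos
  set ε := m / (3 * M) with hεdef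
  have hε : 0 < ε := div_pos hm (by linarith)
  have h3 : 3 * M * ε = m := by
    rw [hεdef, mul_div_cancel₀]
    positivity
  have h3j : 3 * M * ε ≤ δj := h3 ▸ le_trans (min_le_left _ _) (min_le_left _ _)
  have h3k : 3 * M * ε ≤ δk := h3 ▸ le_trans (min_le_left _ _) (min_le_right _ _)
  have h31 : 3 * M * ε ≤ 1 := h3 ▸ min_le_right _ _
  have hε1 : 3 * ε ≤ 1 := by nlinarith [mul_nonneg (sub_nonneg.2 hM1) hε.le]
  have g1 : 1 + lamj ^ 2 * (Pj + ε) ≤ (Nj - ε + 1) ^ 2 := by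
    have a1 : lamj ^ 2 * ε ≤ M * ε := mul_le_mul_of_nonneg_right hlj2 hε.le
    have a2 : 2 * (Nj + 1) * ε ≤ M * ε := mul_le_mul_of_nonneg_right hNjM hε.le
    nlinarith [h3j, hδjdef, sq_nonneg ε]
  have g2 : (Nk + ε + 1) ^ 2 ≤ 1 + lamk ^ 2 * (Pk - ε) := by
    have a1 : lamk ^ 2 * ε ≤ M * ε := mul_le_mul_of_nonneg_right hlk2 hε.le
    have a2 : 2 * (Nk + 1) * ε ≤ M * ε := mul_le_mul_of_nonneg_right hNkM hε.le
    have a3 : ε * ε ≤ M * ε := mul_le_mul_of_nonneg_right (by linarith) hε.le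
    nlinarith [h3k, hδkdef]
  refine ⟨ε, ε, hε, hε, g1, g2, ?_, ?_⟩
  · rw [min_eq_left g1, min_eq_left hj.le]
    have := mul_pos (pow_pos hlamj 2) hε
    linarith [mul_add (lamj ^ 2) Pj ε]
  · rw [min_eq_right g2, min_eq_right hk.le]
    have h1 : (Nk + ε + 1) ^ 2 = (Nk + 1) ^ 2 + (2 * (Nk + 1) * ε + ε * ε) := by ring
    have h2 := mul_pos (show (0 : ℝ) < 2 * (Nk + 1) by linarith) hε
    have h3 := mul_pos hε hε
    linarith
end
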